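/- arXiv:2205.01955 — 3 statements merged into one kernel-verified Lean document; each statement's English description precedes it below -/
import Mathlib

section
/- If Φ is a set of fuzzy simulations between fuzzy automata A and A', then the pointwise supremum ⋃Φ, defined by (⋃Φ)(x,x') = ⋁_{φ∈Φ} φ(x,x'), is also a fuzzy simulation between A and A'. Consequently, the greatest fuzzy simulation between A and A' exists. -/
/-- A complete residuated lattice: a complete lattice with a commutative monoid
structure whose unit is the top element, together with a residuum `himp`
satisfying the adjointness property. -/
class CompleteResiduatedLattice (L : Type*) extends CompleteLattice L, CommMonoid L where
  himp : L → L → L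
  adjoint : ∀ a b c : L, a * b ≤ c ↔ a ≤ himp b c
  one_eq_top : (1 : L) = ⊤

open CompleteResiduatedLattice

variable {L : Type*} [CompleteResiduatedLattice L]

/-- Sup-⊗ composition of fuzzy relations. -/
def relComp {X Y Z : Type*} (φ : X → Y → L) (ψ : Y → Z → L) : X → Z → L :=
  fun x z => ⨆ y, φ x y * ψ y z

/-- Composition of a fuzzy relation with a fuzzy set. -/
def relSet {X Y : Type*} (φ : X → Y → L) (g : Y → L) : X → L :=
  fun x => ⨆ y, φ x y * g y

/-- Composition of a fuzzy set with a fuzzy relation. -/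
def setRel {X Y : Type*} (f : X → L) (φ : X → Y → L) : Y → L :=
  fun y => ⨆ x, f x * φ x y

/-- The converse of a fuzzy relation. -/
def conv {X Y : Type*} (φ : X → Y → L) : Y → X → L := fun y x => φ x y

/-- The fuzzy degree of inclusion of fuzzy sets. -/
def fuzS {X : Type*} (f g : X → L) : L := ⨅ x, himp (f x) (g x)

/-- The fuzzy degree of equality of fuzzy sets. -/
def fuzE {X : Type*} (f g : X → L) : L := ⨅ x, himp (f x) (g x) ⊓ himp (g x) (f x)

/-- A fuzzy automaton over the alphabet `Sig` with state set `A`. -/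
structure FuzzyAutomaton (L : Type*) (Sig : Type*) (A : Type*) where
  δ : A → Sig → A → L
  σ : A → L
  τ : A → L

variable {Sig : Type*}

/-- A fuzzy simulation between two fuzzy automata. -/
def IsFuzzySimulation {A A' : Type*} (M : FuzzyAutomaton L Sig A)
    (M' : FuzzyAutomaton L Sig A') (φ : A → A' → L) : Prop :=
  (∀ s, relComp (conv φ) (fun x y => M.δ x s y) ≤
        relComp (fun x' y' => M'.δ x' s y') (conv φ)) ∧
  relSet (conv φ) M.τ ≤ M'.τ

/-- The norm of a fuzzy simulation: `S(σ^A, σ^{A'} ∘ φ⁻¹)`. -/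
def simNorm {A A' : Type*} (M : FuzzyAutomaton L Sig A)
    (M' : FuzzyAutomaton L Sig A') (φ : A → A' → L) : L :=
  fuzS M.σ (setRel M'.σ (conv φ))

/-- A fuzzy bisimulation between two fuzzy automata. -/
def IsFuzzyBisimulation {A A' : Type*} (M : FuzzyAutomaton L Sig A)
    (M' : FuzzyAutomaton L Sig A') (φ : A → A' → L) : Prop :=
  IsFuzzySimulation M M' φ ∧ IsFuzzySimulation M' M (conv φ)

/-- The norm of a fuzzy bisimulation. -/
def bisimNorm {A A' : Type*} (M : FuzzyAutomaton L Sig A)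
    (M' : FuzzyAutomaton L Sig A') (φ : A → A' → L) : L :=
  simNorm M M' φ ⊓ simNorm M' M (conv φ)

/-- The fuzzy language recognized from a given state:
`L(A,x)(s₁…sₙ) = (δ_{s₁} ∘ … ∘ δ_{sₙ} ∘ τ)(x)`. -/
def langFrom {A : Type*} (M : FuzzyAutomaton L Sig A) : A → List Sig → L
  | x, [] => M.τ x
  | x, s :: w => ⨆ y, M.δ x s y * langFrom M y w

/-- The fuzzy language recognized by a fuzzy automaton. -/
def lang {A : Type*} (M : FuzzyAutomaton L Sig A) (w : List Sig) : L :=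
  ⨆ x, M.σ x * langFrom M x w
namespace CompleteResiduatedLattice

instance : MulLeftMono L where
  elim c a b h := by
    change c * a ≤ c * b
    rw [mul_comm c a, mul_comm c b, adjoint]
    exact h.trans ((adjoint b c _).mp le_rfl)

theorem iSup_mul_le_iff {ι : Sort*} {f : ι → L} {c d : L} :
    (⨆ i, f i) * c ≤ d ↔ ∀ i, f i * c ≤ d := by
  simp only [adjoint, iSup_le_iff]

end CompleteResiduatedLattice

open CompleteResiduatedLattice

section FuzzyRelations

variable {X Y Z : Type*}

theorem relComp_le_iff {φ : X → Y → L} {ψ : Y → Z → L} {χ : X → Z → L} :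
    relComp φ ψ ≤ χ ↔ ∀ x y z, φ x y * ψ y z ≤ χ x z := by
  simp only [Pi.le_def, relComp, iSup_le_iff]
  exact ⟨fun h x y z => h x z y, fun h x z y => h x y z⟩

theorem mul_le_relComp (φ : X → Y → L) (ψ : Y → Z → L) (x : X) (y : Y) (z : Z) :
    φ x y * ψ y z ≤ relComp φ ψ x z :=
  le_iSup (fun y => φ x y * ψ y z) y

theorem relComp_mono_right {φ : X → Y → L} {ψ ψ' : Y → Z → L} (h : ψ ≤ ψ') :
    relComp φ ψ ≤ relComp φ ψ' := fun _ z =>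
  iSup_mono fun y => mul_le_mul_right (h y z) _

theorem relSet_le_iff {φ : X → Y → L} {g : Y → L} {f : X → L} :
    relSet φ g ≤ f ↔ ∀ x y, φ x y * g y ≤ f x := by
  simp only [Pi.le_def, relSet, iSup_le_iff]

theorem mul_le_relSet (φ : X → Y → L) (g : Y → L) (x : X) (y : Y) :
    φ x y * g y ≤ relSet φ g x :=
  le_iSup (fun y => φ x y * g y) y

end FuzzyRelations

section FuzzySimulation

variable {A A' : Type*} {M : FuzzyAutomaton L Sig A} {M' : FuzzyAutomaton L Sig A'}

/-- Both simulation inequalities have the form `φ⁻¹ ∘ R ≤ S ∘ φ⁻¹`, whose left side is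
join-preserving and whose right side is monotone in `φ`. -/
theorem IsFuzzySimulation.biSup {Φ : Set (A → A' → L)}
    (hΦ : ∀ φ ∈ Φ, IsFuzzySimulation M M' φ) :
    IsFuzzySimulation M M' fun x x' => ⨆ φ ∈ Φ, φ x x' := by
  have le_biSup : ∀ φ ∈ Φ, conv φ ≤ conv fun x x' => ⨆ φ ∈ Φ, φ x x' :=
    fun φ hφ x' x => le_iSup₂_of_le φ hφ le_rfl
  refine ⟨fun s => relComp_le_iff.mpr fun x' y z => ?_, relSet_le_iff.mpr fun x' y => ?_⟩
  · refine iSup_mul_le_iff.mpr fun φ => iSup_mul_le_iff.mpr fun hφ => ?_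
    calc conv φ x' y * M.δ y s z
        ≤ relComp (conv φ) (fun x y => M.δ x s y) x' z :=
          mul_le_relComp (conv φ) (fun x y => M.δ x s y) x' y z
      _ ≤ relComp (fun x' y' => M'.δ x' s y') (conv φ) x' z := (hΦ φ hφ).1 s x' z
      _ ≤ _ := relComp_mono_right (le_biSup φ hφ) x' z
  · refine iSup_mul_le_iff.mpr fun φ => iSup_mul_le_iff.mpr fun hφ => ?_
    exact (mul_le_relSet (conv φ) M.τ x' y).trans ((hΦ φ hφ).2 x')

theorem isGreatest_fuzzySimulation :
    IsGreatest {φ | IsFuzzySimulation M M' φ}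
      fun x x' => ⨆ φ ∈ {φ | IsFuzzySimulation M M' φ}, φ x x' :=
  ⟨.biSup fun _ h => h, fun ψ hψ _ _ => le_iSup₂_of_le ψ hψ le_rfl⟩

end FuzzySimulation

theorem stmt8_general {A A' : Type*}
    (M : FuzzyAutomaton L Sig A) (M' : FuzzyAutomaton L Sig A')
    (Φ : Set (A → A' → L)) (hΦ : ∀ φ ∈ Φ, IsFuzzySimulation M M' φ) :
    IsFuzzySimulation M M' (fun x x' => ⨆ φ ∈ Φ, φ x x') ∧
    ∃ ζ : A → A' → L, IsFuzzySimulation M M' ζ ∧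
      ∀ ψ : A → A' → L, IsFuzzySimulation M M' ψ → ψ ≤ ζ :=
  ⟨.biSup hΦ, _, isGreatest_fuzzySimulation.1, fun _ hψ => isGreatest_fuzzySimulation.2 hψ⟩

theorem stmt8 {A A' : Type*} [Nonempty A] [Nonempty A']
    (M : FuzzyAutomaton L Sig A) (M' : FuzzyAutomaton L Sig A')
    (Φ : Set (A → A' → L)) (hΦ : ∀ φ ∈ Φ, IsFuzzySimulation M M' φ) :
    IsFuzzySimulation M M' (fun x x' => ⨆ φ ∈ Φ, φ x x') ∧
    ∃ ζ : A → A' → L, IsFuzzySimulation M M' ζ ∧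
      ∀ ψ : A → A' → L, IsFuzzySimulation M M' ψ → ψ ≤ ζ :=
  stmt8_general M M' Φ hΦ
end

section
/- If φ is a fuzzy simulation between fuzzy automata A and A', then ‖φ‖ ≤ S(L(A), L(A')), i.e., the norm of φ is at most the degree to which the fuzzy language recognized by A is a subset of the fuzzy language recognized by A'. -/
open CompleteResiduatedLattice

variable {L : Type*} [CompleteResiduatedLattice L]

variable {Sig : Type*}

theorem CompleteResiduatedLattice.gc_mul_himp (b : L) : GaloisConnection (· * b) (himp b) :=
  fun a c => adjoint a b c

instance CompleteResiduatedLattice.toIsQuantale : IsQuantale L where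
  sSup_mul_distrib s b := (gc_mul_himp b).l_sSup
  mul_sSup_distrib a s := by
    simp only [mul_comm a]
    exact (gc_mul_himp a).l_sSup

open Quantale

section FuzzyRelations

variable {X Y Z : Type*}

theorem relSet_relComp (φ : X → Y → L) (ψ : Y → Z → L) (g : Z → L) :
    relSet (relComp φ ψ) g = relSet φ (relSet ψ g) := by
  funext x
  simp only [relSet, relComp, iSup_mul_distrib, mul_iSup_distrib, mul_assoc]
  exact iSup_comm

theorem relSet_mono {φ φ' : X → Y → L} {g g' : Y → L} (hφ : φ ≤ φ') (hg : g ≤ g') :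
    relSet φ g ≤ relSet φ' g' :=
  fun x => iSup_mono fun y => mul_le_mul' (hφ x y) (hg y)

theorem iSup_setRel_mul (f : Y → L) (φ : Y → X → L) (g : X → L) :
    ⨆ x, setRel f φ x * g x = ⨆ y, f y * relSet φ g y := by
  simp only [setRel, relSet, iSup_mul_distrib, mul_iSup_distrib, mul_assoc]
  exact iSup_comm

theorem le_fuzS_iff {a : L} {f g : X → L} : a ≤ fuzS f g ↔ ∀ x, a * f x ≤ g x := by
  simp only [fuzS, le_iInf_iff, adjoint]

theorem fuzS_mul_le (f g : X → L) (x : X) : fuzS f g * f x ≤ g x :=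
  le_fuzS_iff.1 le_rfl x

end FuzzyRelations

theorem langFrom_cons {A : Type*} (M : FuzzyAutomaton L Sig A) (s : Sig) (w : List Sig) :
    (fun x => langFrom M x (s :: w)) = relSet (fun x y => M.δ x s y) (fun y => langFrom M y w) :=
  rfl

theorem IsFuzzySimulation.relSet_langFrom_le {A A' : Type*} {M : FuzzyAutomaton L Sig A}
    {M' : FuzzyAutomaton L Sig A'} {φ : A → A' → L} (hφ : IsFuzzySimulation M M' φ)
    (w : List Sig) : relSet (conv φ) (fun x => langFrom M x w) ≤ fun x' => langFrom M' x' w := by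
  induction w with
  | nil => exact hφ.2
  | cons s w ih =>
    rw [langFrom_cons, langFrom_cons, ← relSet_relComp]
    calc relSet (relComp (conv φ) fun x y => M.δ x s y) (fun y => langFrom M y w)
        ≤ relSet (relComp (fun x' y' => M'.δ x' s y') (conv φ)) (fun y => langFrom M y w) :=
          relSet_mono (hφ.1 s) le_rfl
      _ = relSet (fun x' y' => M'.δ x' s y') (relSet (conv φ) fun y => langFrom M y w) :=
          relSet_relComp _ _ _
      _ ≤ relSet (fun x' y' => M'.δ x' s y') (fun y' => langFrom M' y' w) :=
          relSet_mono le_rfl ih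

theorem stmt14_general {A A' : Type*}
    (M : FuzzyAutomaton L Sig A) (M' : FuzzyAutomaton L Sig A')
    (φ : A → A' → L) (hφ : IsFuzzySimulation M M' φ) :
    simNorm M M' φ ≤ fuzS (lang M) (lang M') := by
  refine le_fuzS_iff.2 fun w => ?_
  calc simNorm M M' φ * lang M w
      = ⨆ x, simNorm M M' φ * M.σ x * langFrom M x w := by
        simp only [lang, mul_iSup_distrib, mul_assoc]
    _ ≤ ⨆ x, setRel M'.σ (conv φ) x * langFrom M x w :=
        iSup_mono fun x => mul_le_mul_left (fuzS_mul_le _ _ x) _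
    _ = ⨆ x', M'.σ x' * relSet (conv φ) (fun x => langFrom M x w) x' :=
        iSup_setRel_mul _ _ _
    _ ≤ lang M' w :=
        iSup_mono fun x' => mul_le_mul_right (hφ.relSet_langFrom_le w x') _

theorem stmt14 {A A' : Type*} [Nonempty A] [Nonempty A']
    (M : FuzzyAutomaton L Sig A) (M' : FuzzyAutomaton L Sig A')
    (φ : A → A' → L) (hφ : IsFuzzySimulation M M' φ) :
    simNorm M M' φ ≤ fuzS (lang M) (lang M') :=
  stmt14_general M M' φ hφ
end

section
/- If φ is a fuzzy bisimulation between fuzzy automata A and A', then for every x ∈ A and x' ∈ A': φ(x,x') ≤ E(L(A,x), L(A',x')), where E(f,g) = ⋀_w((f(w) → g(w)) ∧ (g(w) → f(w))) is the fuzzy degree of equality of the recognized fuzzy languages. -/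
open CompleteResiduatedLattice

variable {L : Type*} [CompleteResiduatedLattice L]

variable {Sig : Type*}

/-!
Induction on the word shows that a simulation `φ` satisfies
`φ(x,x') ⊗ L(A,x)(w) ≤ L(A',x')(w)`; the step uses the simulation condition on `δ` and
the distributivity of `⊗` over joins. By residuation these inequalities for `φ` and its
converse are exactly the two implications in `E(L(A,x), L(A',x'))`.
-/

namespace CompleteResiduatedLattice

theorem gc_mul_himp_s19 (b : L) : GaloisConnection (· * b) (himp b) :=
  fun a c => adjoint a b c

-- Multiplication is a left adjoint, so it distributes over arbitrary joins.
instance : IsQuantale L where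
  mul_sSup_distrib x s := by simpa only [mul_comm x] using (gc_mul_himp_s19 x).l_sSup
  sSup_mul_distrib s y := (gc_mul_himp_s19 y).l_sSup

theorem le_fuzE_iff {X : Type*} {a : L} {f g : X → L} :
    a ≤ fuzE f g ↔ ∀ x, a * f x ≤ g x ∧ a * g x ≤ f x := by
  simp only [fuzE, le_iInf_iff, le_inf_iff, adjoint]

end CompleteResiduatedLattice

open Quantale

namespace IsFuzzySimulation

variable {A A' : Type*} {M : FuzzyAutomaton L Sig A} {M' : FuzzyAutomaton L Sig A'}
  {φ : A → A' → L}

theorem mul_δ_le (h : IsFuzzySimulation M M' φ) (s : Sig) (x y : A) (x' : A') :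
    φ x x' * M.δ x s y ≤ ⨆ y', M'.δ x' s y' * φ y y' :=
  (le_iSup (fun z => conv φ x' z * M.δ z s y) x).trans (h.1 s x' y)

theorem mul_τ_le (h : IsFuzzySimulation M M' φ) (x : A) (x' : A') :
    φ x x' * M.τ x ≤ M'.τ x' :=
  (le_iSup (fun z => conv φ x' z * M.τ z) x).trans (h.2 x')

theorem mul_langFrom_le (h : IsFuzzySimulation M M' φ) (w : List Sig) (x : A) (x' : A') :
    φ x x' * langFrom M x w ≤ langFrom M' x' w := by
  induction w generalizing x x' with
  | nil => exact h.mul_τ_le x x'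
  | cons s w ih =>
    simp only [langFrom, mul_iSup_distrib]
    refine iSup_le fun y => ?_
    calc φ x x' * (M.δ x s y * langFrom M y w)
        = φ x x' * M.δ x s y * langFrom M y w := (mul_assoc _ _ _).symm
      _ ≤ (⨆ y', M'.δ x' s y' * φ y y') * langFrom M y w :=
          mul_le_mul_left (h.mul_δ_le s x y x') _
      _ = ⨆ y', M'.δ x' s y' * (φ y y' * langFrom M y w) := by
          simp only [iSup_mul_distrib, mul_assoc]
      _ ≤ ⨆ y', M'.δ x' s y' * langFrom M' y' w :=
          iSup_mono fun y' => mul_le_mul_right (ih y y') _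

end IsFuzzySimulation

theorem stmt19_general {A A' : Type*}
    (M : FuzzyAutomaton L Sig A) (M' : FuzzyAutomaton L Sig A')
    (φ : A → A' → L) (hφ : IsFuzzyBisimulation M M' φ) (x : A) (x' : A') :
    φ x x' ≤ fuzE (langFrom M x) (langFrom M' x') :=
  le_fuzE_iff.mpr fun w => ⟨hφ.1.mul_langFrom_le w x x', hφ.2.mul_langFrom_le w x' x⟩

theorem stmt19 {A A' : Type*} [Nonempty A] [Nonempty A']
    (M : FuzzyAutomaton L Sig A) (M' : FuzzyAutomaton L Sig A')
    (φ : A → A' → L) (hφ : IsFuzzyBisimulation M M' φ) (x : A) (x' : A') :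
    φ x x' ≤ fuzE (langFrom M x) (langFrom M' x') :=
  stmt19_general M M' φ hφ x x'
end
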